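/- A sequence v ∈ ℓ²(ℕ,ℂ) satisfies Γ_f(conj∘v) = 0 if and only if Σ_{k=0}^∞ conj(v(k))·z_j^k = 0 for every j = 1,…,N. -/

import Mathlib

/-! Substituting `f(k + r) = Σ_j a_j z_j^k z_j^r` and exchanging the finite sum with the series
gives `(Γ_f (conj ∘ v))(k) = Σ_j a_j S_j z_j^k` with `S_j = Σ_r conj(v r) z_j^r`. The vanishing of
these sums for all `k` is a Vandermonde system in the distinct nodes `z_j`, so it forces
`a_j S_j = 0`, that is `S_j = 0` since `a_j ≠ 0`. -/

open Finset

theorem Memℓp.summable_mul_pow {𝕜 : Type*} [NontriviallyNormedField 𝕜] [CompleteSpace 𝕜]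
    {p : ENNReal} {u : ℕ → 𝕜} (hu : Memℓp u p) {z : 𝕜} (hz : ‖z‖ < 1) :
    Summable fun r => u r * z ^ r := by
  obtain ⟨C, hC⟩ := (hu.of_exponent_ge le_top).bddAbove
  refine Summable.of_norm_bounded ((summable_geometric_of_lt_one (norm_nonneg _) hz).mul_left C)
    fun r => ?_
  rw [norm_mul, norm_pow]
  exact mul_le_mul_of_nonneg_right (hC ⟨r, rfl⟩) (by positivity)

theorem tsum_sum_mul_pow_add_mul {𝕜 ι : Type*} [NontriviallyNormedField 𝕜] [Fintype ι]
    {a z : ι → 𝕜} {u : ℕ → 𝕜} (hu : ∀ j, Summable fun r => u r * z j ^ r) (k : ℕ) :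
    ∑' r, (∑ j, a j * z j ^ (k + r)) * u r = ∑ j, a j * (∑' r, u r * z j ^ r) * z j ^ k := by
  calc ∑' r, (∑ j, a j * z j ^ (k + r)) * u r
      = ∑' r, ∑ j, a j * z j ^ k * (u r * z j ^ r) := by
        refine tsum_congr fun r => ?_
        rw [sum_mul]
        exact sum_congr rfl fun j _ => by ring
    _ = ∑ j, a j * z j ^ k * ∑' r, u r * z j ^ r := by
        rw [Summable.tsum_finsetSum fun j _ => (hu j).mul_left _]
        exact sum_congr rfl fun j _ => (hu j).tsum_mul_left _
    _ = ∑ j, a j * (∑' r, u r * z j ^ r) * z j ^ k := sum_congr rfl fun j _ => by ring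

theorem forall_sum_mul_pow_eq_zero_iff {R : Type*} [CommRing R] [IsDomain R] {n : ℕ}
    {z : Fin n → R} (hz : Function.Injective z) {c : Fin n → R} :
    (∀ k : ℕ, ∑ j, c j * z j ^ k = 0) ↔ c = 0 :=
  ⟨fun h => Matrix.eq_zero_of_forall_pow_sum_mul_pow_eq_zero hz fun i => h i,
    fun h k => by simp [h]⟩

theorem stmt_9_general (N : ℕ) (a z : Fin N → ℂ)
    (ha : ∀ j, a j ≠ 0) (hzinj : Function.Injective z)
    (hz : ∀ j, 0 < ‖z j‖ ∧ ‖z j‖ < 1)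
    (f : ℕ → ℂ) (hf : ∀ k, f k = ∑ j, a j * z j ^ k)
    (v : ℕ → ℂ) (hv : Memℓp v 2) :
    (∀ k : ℕ, ∑' r, f (k + r) * (starRingEnd ℂ) (v r) = 0) ↔
    ∀ j, ∑' k : ℕ, (starRingEnd ℂ) (v k) * z j ^ k = 0 := by
  have hsum (j : Fin N) : Summable fun r => (starRingEnd ℂ) (v r) * z j ^ r :=
    hv.star_mem.summable_mul_pow (hz j).2
  simp only [hf, tsum_sum_mul_pow_add_mul hsum, forall_sum_mul_pow_eq_zero_iff hzinj,
    funext_iff, Pi.zero_apply, mul_eq_zero, ha, false_or]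

/-- `v ∈ ℓ²` satisfies `Γ_f(conj∘v) = 0` iff
`Σ_k conj(v(k))·z_j^k = 0` for every `j = 1,…,N`. -/
theorem stmt_9 (N : ℕ) (hN : 1 ≤ N) (a z : Fin N → ℂ)
    (ha : ∀ j, a j ≠ 0) (hzinj : Function.Injective z)
    (hz : ∀ j, 0 < ‖z j‖ ∧ ‖z j‖ < 1)
    (f : ℕ → ℂ) (hf : ∀ k, f k = ∑ j, a j * z j ^ k)
    (v : ℕ → ℂ) (hv : Memℓp v 2) :
    (∀ k : ℕ, ∑' r, f (k + r) * (starRingEnd ℂ) (v r) = 0) ↔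
    ∀ j, ∑' k : ℕ, (starRingEnd ℂ) (v k) * z j ^ k = 0 :=
  stmt_9_general N a z ha hzinj hz f hf v hv
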